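/- arXiv:0708.3442 — 6 statements merged into one kernel-verified Lean document; each statement's English description precedes it below -/
import Mathlib

section
/- Let g, h be finite-dimensional nilpotent Lie algebras and φ : (Λg*, d) → (Λh*, d) a quasi-isomorphism of Chevalley–Eilenberg DGAs. If the restriction of φ to V_{p-1}(g) is an isomorphism onto V_{p-1}(h), then the restriction of φ to V_p(g) is injective. -/
/-!
Let `G : h → g` be the map whose transpose is `f`. Contracting `φ(dα) = d(φα) = 0` with
`y₁, y₂ ∈ h` gives `α⁅G y₁, G y₂⁆ = 0`. Since `α ∈ V_{p+1}`, each `α ∘ ad x` lies in `V_p`, and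
`f` kills `α ∘ ad (G y)`, so injectivity on `V_p` gives `α⁅G y, ·⁆ = 0`. As `f` is injective on
`V_p`, the joint kernel of `V_p` and the range of `G` span `g`, and `α` vanishes on brackets with
either, so `dα = 0`. Then `α` is closed with `φα = 0` exact, hence exact by injectivity on
cohomology; but no exact form has a component in degree `1`, so `α = 0`.
-/

open ExteriorAlgebra

/-- The annihilator filtration `V_0 = {0}`, `V_{p+1} = {α : dα ∈ Λ²V_p}` of the dual of a
Lie algebra; the condition `dα ∈ Λ²V_p` is expressed (equivalently, in finite dimensions)
by requiring `α` to annihilate all brackets `⁅x, y⁆` with `x` in the joint kernel of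
`V_p`. -/
def Vfilt (K L : Type*) [Field K] [LieRing L] [LieAlgebra K L] :
    ℕ → Submodule K (Module.Dual K L)
  | 0 => ⊥
  | p + 1 => Submodule.dualAnnihilator (Submodule.span K
      {z : L | ∃ x y : L, (∀ β ∈ Vfilt K L p, β x = 0) ∧ z = ⁅x, y⁆})

theorem Finset.sum_sum_ite_lt_skew {ι R : Type*} [Fintype ι] [LinearOrder ι] [CommRing R]
    (c : ι → ι → R) (hc : ∀ i j, c j i = -c i j) (hdiag : ∀ i, c i i = 0) (x y : ι → R) :
    ∑ i, ∑ j, (if i < j then c i j * (x i * y j - x j * y i) else 0) =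
      ∑ i, ∑ j, c i j * (x i * y j) := by
  have hsplit : ∀ i j, c i j * (x i * y j) =
      (if i < j then c i j * (x i * y j) else 0) + (if j < i then c i j * (x i * y j) else 0) := by
    intro i j
    rcases lt_trichotomy i j with h | rfl | h
    · simp [h, h.not_gt]
    · simp [hdiag]
    · simp [h, h.not_gt]
  have hlt : ∀ i j, (if i < j then c i j * (x i * y j - x j * y i) else 0) =
      (if i < j then c i j * (x i * y j) else 0) + (if i < j then c j i * (x j * y i) else 0) := by
    intro i j
    split_ifs
    · rw [hc]; ring
    · simp
  calc _ = ∑ i, ∑ j, (if i < j then c i j * (x i * y j) else 0) +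
          ∑ i, ∑ j, (if i < j then c j i * (x j * y i) else 0) := by
        simp only [hlt, Finset.sum_add_distrib]
    _ = ∑ i, ∑ j, (if i < j then c i j * (x i * y j) else 0) +
          ∑ i, ∑ j, (if j < i then c i j * (x i * y j) else 0) := by
        rw [Finset.sum_comm (f := fun i j => if j < i then c i j * (x i * y j) else 0)]
    _ = _ := by
        simp only [← Finset.sum_add_distrib, ← hsplit]

namespace LinearMap

variable {R V W : Type*} [CommRing R] [AddCommGroup V] [Module R V] [AddCommGroup W] [Module R W]
  [Module.IsReflexive R V]

noncomputable def predual (f : Module.Dual R V →ₗ[R] Module.Dual R W) : W →ₗ[R] V :=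
  (Module.evalEquiv R V).symm.toLinearMap ∘ₗ f.dualMap ∘ₗ Module.Dual.eval R W

variable (f : Module.Dual R V →ₗ[R] Module.Dual R W)

theorem eval_predual (y : W) :
    Module.Dual.eval R V (f.predual y) = Module.Dual.eval R W y ∘ₗ f := by
  simp only [predual, coe_comp, LinearEquiv.coe_coe, Function.comp_apply]
  exact (Module.evalEquiv R V).apply_symm_apply _

theorem apply_predual (β : Module.Dual R V) (y : W) : β (f.predual y) = f β y :=
  LinearMap.congr_fun (eval_predual f y) β

end LinearMap

theorem Submodule.dualCoannihilator_sup_range_predual_eq_top {K V W : Type*} [Field K]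
    [AddCommGroup V] [Module K V] [FiniteDimensional K V] [AddCommGroup W] [Module K W]
    (U : Submodule K (Module.Dual K V)) (f : Module.Dual K V →ₗ[K] Module.Dual K W)
    (hf : ∀ β ∈ U, f β = 0 → β = 0) :
    U.dualCoannihilator ⊔ LinearMap.range f.predual = ⊤ := by
  rw [← Subspace.dualAnnihilator_inj, Submodule.dualAnnihilator_top,
    Submodule.dualAnnihilator_sup_eq, Subspace.dualCoannihilator_dualAnnihilator_eq, eq_bot_iff]
  rintro β ⟨hβU, hβf⟩
  refine (Submodule.mem_bot K).mpr (hf β hβU (LinearMap.ext fun y => ?_))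
  rw [← f.apply_predual]
  exact (Submodule.mem_dualAnnihilator β).mp hβf _ ⟨y, rfl⟩

namespace ExteriorAlgebra

variable {R M N : Type*} [CommRing R] [AddCommGroup M] [Module R M] [AddCommGroup N] [Module R N]

theorem ι_mul_ι_mem_exteriorPower_two (x y : M) : ι R x * ι R y ∈ ⋀[R]^2 M := by
  rw [exteriorPower, pow_two]
  exact Submodule.mul_mem_mul ⟨x, rfl⟩ ⟨y, rfl⟩

theorem toTrivSqZeroExt_eq_zero_of_mem_exteriorPower_two [Module Rᵐᵒᵖ M] [IsCentralScalar R M]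
    {w : ExteriorAlgebra R M} (hw : w ∈ ⋀[R]^2 M) : toTrivSqZeroExt w = 0 := by
  suffices ⋀[R]^2 M ≤ LinearMap.ker (toTrivSqZeroExt (R := R) (M := M)).toLinearMap from this hw
  rw [exteriorPower, pow_two, Submodule.mul_le]
  rintro _ ⟨x, rfl⟩ _ ⟨y, rfl⟩
  simp [TrivSqZeroExt.inr_mul_inr]

theorem algebraMapInv_contractLeft_ι_mul_ι (d₁ d₂ : Module.Dual R M) (a c : M) :
    algebraMapInv (CliffordAlgebra.contractLeft d₁ (CliffordAlgebra.contractLeft d₂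
      (ι R a * ι R c))) = d₂ a * d₁ c - d₁ a * d₂ c := by
  simp [CliffordAlgebra.contractLeft_ι_mul, CliffordAlgebra.contractLeft_ι, algebraMapInv]

/- `toTrivSqZeroExt` keeps exactly the components of degree `0` and `1`, and an odd derivation
sending `M` into `⋀²M` raises degrees. -/
section Derivation

variable [Module Rᵐᵒᵖ M] [IsCentralScalar R M]
  (D : ExteriorAlgebra R M →ₗ[R] ExteriorAlgebra R M) (hD1 : D 1 = 0)
  (hDι : ∀ a, D (ι R a) ∈ ⋀[R]^2 M)
  (hDder : ∀ a w, D (ι R a * w) = D (ι R a) * w - ι R a * D w)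
include hD1 hDι hDder

theorem toTrivSqZeroExt_derivation_apply (w : ExteriorAlgebra R M) :
    toTrivSqZeroExt (D w) = 0 := by
  induction w using CliffordAlgebra.left_induction with
  | algebraMap r => rw [Algebra.algebraMap_eq_smul_one, map_smul, hD1, smul_zero, map_zero]
  | add x y hx hy => rw [map_add, map_add, hx, hy, add_zero]
  | ι_mul x a hx =>
    rw [hDder, map_sub, map_mul, map_mul, hx,
      toTrivSqZeroExt_eq_zero_of_mem_exteriorPower_two (hDι a), zero_mul, mul_zero, sub_zero]

theorem eq_zero_of_ι_mem_range {a : M} (ha : ι R a ∈ LinearMap.range D) : a = 0 := by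
  obtain ⟨w, hw⟩ := ha
  have := congrArg toTrivSqZeroExt hw
  rw [toTrivSqZeroExt_derivation_apply D hD1 hDι hDder, toTrivSqZeroExt_ι] at this
  exact (congrArg TrivSqZeroExt.snd this).symm

end Derivation

theorem contractLeft_map (f : M →ₗ[R] N) (d : Module.Dual R N) (w : ExteriorAlgebra R M) :
    CliffordAlgebra.contractLeft d (map f w) =
      map f (CliffordAlgebra.contractLeft (d ∘ₗ f) w) := by
  induction w using CliffordAlgebra.left_induction with
  | algebraMap r => simp [CliffordAlgebra.contractLeft_algebraMap]
  | add x y hx hy => rw [map_add, map_add, map_add, hx, hy, map_add]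
  | ι_mul x a hx =>
    rw [map_mul, map_apply_ι, CliffordAlgebra.contractLeft_ι_mul,
      CliffordAlgebra.contractLeft_ι_mul, hx, map_sub, map_smul, map_mul, map_apply_ι,
      LinearMap.comp_apply]

theorem algebraMapInv_map (f : M →ₗ[R] N) (w : ExteriorAlgebra R M) :
    algebraMapInv (map f w) = algebraMapInv w := by
  rw [← AlgHom.comp_apply]
  congr 1
  exact hom_ext (LinearMap.ext fun x => by simp [algebraMapInv])

end ExteriorAlgebra

section ChevalleyEilenberg

variable {R g : Type*} [CommRing R] [LieRing g] [LieAlgebra R g] {m : ℕ}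

-- The Chevalley–Eilenberg differential `d : g* → Λ²g*`, written in the basis `b`.
noncomputable def ceDiff (b : Module.Basis (Fin m) R g) (α : Module.Dual R g) :
    ExteriorAlgebra R (Module.Dual R g) :=
  - ∑ i : Fin m, ∑ j : Fin m, if (i : ℕ) < (j : ℕ) then
      α ⁅b i, b j⁆ • (ι R (b.dualBasis i) * ι R (b.dualBasis j)) else 0

variable (b : Module.Basis (Fin m) R g) (α : Module.Dual R g)

theorem ceDiff_mem_exteriorPower_two : ceDiff b α ∈ ⋀[R]^2 (Module.Dual R g) := by
  refine Submodule.neg_mem _ (Submodule.sum_mem _ fun i _ => Submodule.sum_mem _ fun j _ => ?_)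
  split_ifs
  · exact Submodule.smul_mem _ _ (ι_mul_ι_mem_exteriorPower_two _ _)
  · exact Submodule.zero_mem _

theorem ceDiff_eq_zero (hα : ∀ x y : g, α ⁅x, y⁆ = 0) : ceDiff b α = 0 := by
  simp [ceDiff, hα]

theorem algebraMapInv_contractLeft_contractLeft_ceDiff (x y : g) :
    algebraMapInv (CliffordAlgebra.contractLeft (Module.Dual.eval R g x)
      (CliffordAlgebra.contractLeft (Module.Dual.eval R g y) (ceDiff b α))) = α ⁅x, y⁆ := by
  have hexp : α ⁅x, y⁆ = ∑ i, ∑ j, α ⁅b i, b j⁆ * (b.repr x i * b.repr y j) := by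
    conv_lhs => rw [← b.sum_repr x, ← b.sum_repr y]
    simp only [sum_lie, lie_sum, smul_lie, lie_smul, map_sum, map_smul, smul_eq_mul]
    simp_rw [Finset.mul_sum]
    rw [Finset.sum_comm]
    exact Finset.sum_congr rfl fun i _ => Finset.sum_congr rfl fun j _ => by ring
  rw [hexp, ← Finset.sum_sum_ite_lt_skew _ (fun i j => by rw [← lie_skew, map_neg])
    (fun i => lie_self (b i) ▸ map_zero α)]
  simp only [ceDiff, map_neg, map_sum, apply_ite, map_smul, map_zero,
    algebraMapInv_contractLeft_ι_mul_ι, Module.Dual.eval_apply, Module.Basis.dualBasis_apply,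
    smul_eq_mul, Fin.val_fin_lt]
  rw [← Finset.sum_neg_distrib]
  refine Finset.sum_congr rfl fun i _ => ?_
  rw [← Finset.sum_neg_distrib]
  refine Finset.sum_congr rfl fun j _ => ?_
  split_ifs <;> ring

end ChevalleyEilenberg

section Vfilt

variable {K L : Type*} [Field K] [LieRing L] [LieAlgebra K L] {p : ℕ} {α : Module.Dual K L}

theorem apply_lie_eq_zero_of_mem_Vfilt_succ (hα : α ∈ Vfilt K L (p + 1)) {x : L}
    (hx : x ∈ (Vfilt K L p).dualCoannihilator) (y : L) : α ⁅x, y⁆ = 0 :=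
  (Submodule.mem_dualAnnihilator α).mp hα _
    (Submodule.subset_span ⟨x, y, (Submodule.mem_dualCoannihilator x).mp hx, rfl⟩)

theorem comp_ad_mem_Vfilt [FiniteDimensional K L] (hα : α ∈ Vfilt K L (p + 1)) (x : L) :
    α ∘ₗ LieAlgebra.ad K L x ∈ Vfilt K L p := by
  rw [← Subspace.dualCoannihilator_dualAnnihilator_eq (W := Vfilt K L p),
    Submodule.mem_dualAnnihilator]
  intro z hz
  rw [LinearMap.comp_apply, LieAlgebra.ad_apply, ← lie_skew, map_neg,
    apply_lie_eq_zero_of_mem_Vfilt_succ hα hz, neg_zero]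

end Vfilt

theorem quasi_isomorphism_filtration_injective_general (K g h : Type*) [Field K]
    [LieRing g] [LieAlgebra K g] [FiniteDimensional K g]
    [LieRing h] [LieAlgebra K h]
    (m : ℕ) (bg : Module.Basis (Fin m) K g)
    (Dg : ExteriorAlgebra K (Module.Dual K g) →ₗ[K] ExteriorAlgebra K (Module.Dual K g))
    (Dh : ExteriorAlgebra K (Module.Dual K h) →ₗ[K] ExteriorAlgebra K (Module.Dual K h))
    (hDg1 : Dg 1 = 0)
    (hDgder : ∀ (α : Module.Dual K g) (w : ExteriorAlgebra K (Module.Dual K g)),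
      Dg (ι K α * w) = Dg (ι K α) * w - ι K α * Dg w)
    (hDgval : ∀ α : Module.Dual K g, Dg (ι K α) =
      - ∑ i : Fin m, ∑ j : Fin m, if (i : ℕ) < (j : ℕ) then
          α ⁅bg i, bg j⁆ • (ι K (bg.dualBasis i) * ι K (bg.dualBasis j)) else 0)
    (φ : ExteriorAlgebra K (Module.Dual K g) →ₐ[K] ExteriorAlgebra K (Module.Dual K h))
    (f : Module.Dual K g →ₗ[K] Module.Dual K h)
    (hφf : ∀ α : Module.Dual K g, φ (ι K α) = ι K (f α))
    (hcomm : ∀ w, φ (Dg w) = Dh (φ w))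
    -- `φ` is a quasi-isomorphism: it induces a surjection and an injection on cohomology
    (hquasi_inj : ∀ x, Dg x = 0 → (∃ z, φ x = Dh z) → ∃ w, x = Dg w)
    (p : ℕ)
    (hiso_inj : ∀ α ∈ Vfilt K g p, f α = 0 → α = 0) :
    ∀ α ∈ Vfilt K g (p + 1), f α = 0 → α = 0 := by
  intro α hα hfα
  have hDgι : ∀ a, Dg (ι K a) = ceDiff bg a := hDgval
  obtain rfl : φ = map f :=
    hom_ext (LinearMap.ext fun a => (hφf a).trans (map_apply_ι f a).symm)
  have hφdα : map f (ceDiff bg α) = 0 := by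
    rw [← hDgι, hcomm, map_apply_ι, hfα, map_zero, map_zero]
  have hpredual : ∀ y₁ y₂ : h, α ⁅f.predual y₁, f.predual y₂⁆ = 0 := by
    intro y₁ y₂
    rw [← algebraMapInv_contractLeft_contractLeft_ceDiff bg, f.eval_predual, f.eval_predual,
      ← algebraMapInv_map f, ← contractLeft_map, ← contractLeft_map, hφdα, map_zero, map_zero,
      map_zero]
  have had : ∀ y, α ∘ₗ LieAlgebra.ad K g (f.predual y) = 0 := fun y =>
    hiso_inj _ (comp_ad_mem_Vfilt hα _) (LinearMap.ext fun y₂ => by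
      simpa [← f.apply_predual] using hpredual y y₂)
  have hbracket : ∀ x z : g, α ⁅x, z⁆ = 0 := by
    intro x z
    have hx : x ∈ (Vfilt K g p).dualCoannihilator ⊔ LinearMap.range f.predual := by
      rw [Submodule.dualCoannihilator_sup_range_predual_eq_top _ f hiso_inj]
      exact Submodule.mem_top
    obtain ⟨u, hu, _, ⟨y, rfl⟩, rfl⟩ := Submodule.mem_sup.mp hx
    rw [add_lie, map_add, apply_lie_eq_zero_of_mem_Vfilt_succ hα hu, zero_add]
    exact LinearMap.congr_fun (had y) z
  obtain ⟨w, hw⟩ := hquasi_inj (ι K α) (by rw [hDgι, ceDiff_eq_zero bg α hbracket])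
    ⟨0, by rw [map_apply_ι, hfα, map_zero, map_zero]⟩
  exact eq_zero_of_ι_mem_range Dg hDg1 (fun a => hDgι a ▸ ceDiff_mem_exteriorPower_two bg a)
    hDgder ⟨w, hw.symm⟩

/-- Let `g`, `h` be finite-dimensional nilpotent Lie algebras and
`φ : (Λg*, d) → (Λh*, d)` a quasi-isomorphism of Chevalley–Eilenberg DGAs (with degree-one
part `f`).  If the restriction of `φ` to `V_p(g)` is an isomorphism onto `V_p(h)`, then the
restriction of `φ` to `V_{p+1}(g)` is injective. -/
theorem quasi_isomorphism_filtration_injective (K g h : Type*) [Field K]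
    [LieRing g] [LieAlgebra K g] [FiniteDimensional K g] [LieRing.IsNilpotent g]
    [LieRing h] [LieAlgebra K h] [FiniteDimensional K h] [LieRing.IsNilpotent h]
    (m n : ℕ) (bg : Module.Basis (Fin m) K g) (bh : Module.Basis (Fin n) K h)
    (Dg : ExteriorAlgebra K (Module.Dual K g) →ₗ[K] ExteriorAlgebra K (Module.Dual K g))
    (Dh : ExteriorAlgebra K (Module.Dual K h) →ₗ[K] ExteriorAlgebra K (Module.Dual K h))
    (hDg1 : Dg 1 = 0) (hDh1 : Dh 1 = 0)
    (hDgder : ∀ (α : Module.Dual K g) (w : ExteriorAlgebra K (Module.Dual K g)),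
      Dg (ι K α * w) = Dg (ι K α) * w - ι K α * Dg w)
    (hDhder : ∀ (β : Module.Dual K h) (w : ExteriorAlgebra K (Module.Dual K h)),
      Dh (ι K β * w) = Dh (ι K β) * w - ι K β * Dh w)
    (hDgval : ∀ α : Module.Dual K g, Dg (ι K α) =
      - ∑ i : Fin m, ∑ j : Fin m, if (i : ℕ) < (j : ℕ) then
          α ⁅bg i, bg j⁆ • (ι K (bg.dualBasis i) * ι K (bg.dualBasis j)) else 0)
    (hDhval : ∀ β : Module.Dual K h, Dh (ι K β) =
      - ∑ i : Fin n, ∑ j : Fin n, if (i : ℕ) < (j : ℕ) then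
          β ⁅bh i, bh j⁆ • (ι K (bh.dualBasis i) * ι K (bh.dualBasis j)) else 0)
    (φ : ExteriorAlgebra K (Module.Dual K g) →ₐ[K] ExteriorAlgebra K (Module.Dual K h))
    (f : Module.Dual K g →ₗ[K] Module.Dual K h)
    (hφf : ∀ α : Module.Dual K g, φ (ι K α) = ι K (f α))
    (hcomm : ∀ w, φ (Dg w) = Dh (φ w))
    -- `φ` is a quasi-isomorphism: it induces a surjection and an injection on cohomology
    (hquasi_surj : ∀ y, Dh y = 0 → ∃ x, Dg x = 0 ∧ ∃ z, y - φ x = Dh z)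
    (hquasi_inj : ∀ x, Dg x = 0 → (∃ z, φ x = Dh z) → ∃ w, x = Dg w)
    (p : ℕ)
    (hiso_onto : Submodule.map f (Vfilt K g p) = Vfilt K h p)
    (hiso_inj : ∀ α ∈ Vfilt K g p, f α = 0 → α = 0) :
    ∀ α ∈ Vfilt K g (p + 1), f α = 0 → α = 0 :=
  quasi_isomorphism_filtration_injective_general K g h m bg Dg Dh hDg1 hDgder hDgval φ f hφf hcomm
    hquasi_inj p hiso_inj
end

section
/- The vectors dω³ and dω̄³ (as above) span a space of complex dimension at most 1 if and only if ρ = 0, |B|² = |C|², AD̄ = ĀD, AB̄ = ĀC, and DB̄ = D̄C. -/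
/-!
Both 2-forms lie in the span of the six wedges `e_i ∧ e_j` (`i < j`) of the independent vectors
`e = (ω¹, ω², ω̄¹, ω̄²)`, which are linearly independent (they are detected by the pairings
with `φ_i ∧ φ_j` for a dual family `φ`). So the span of `dω³, dω̄³` has the dimension of the span
of their coefficient vectors `u = (ρ, A, B, C, D, 0)` and `w = (0, -Ā, -C̄, -B̄, -D̄, ρ̄)` in `ℂ⁶`,
which is at most one exactly when all `2 × 2` minors `u_i w_j - u_j w_i` vanish. The minor `ρρ̄`
forces `ρ = 0`, after which the remaining minors are, up to sign and complex conjugation,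
`|B|² - |C|²`, `AD̄ - ĀD`, `AB̄ - ĀC` and `DB̄ - D̄C`.
-/

open ExteriorAlgebra Module ComplexConjugate

noncomputable def dOmega3 {V : Type*} [AddCommGroup V] [Module ℂ V]
    (ω1 ω2 bω1 bω2 : V) (ρ A B C D : ℂ) : ExteriorAlgebra ℂ V :=
  ρ • (ι ℂ ω1 * ι ℂ ω2) + A • (ι ℂ ω1 * ι ℂ bω1) + B • (ι ℂ ω1 * ι ℂ bω2) +
    C • (ι ℂ ω2 * ι ℂ bω1) + D • (ι ℂ ω2 * ι ℂ bω2)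

noncomputable def dOmegaBar3 {V : Type*} [AddCommGroup V] [Module ℂ V]
    (ω1 ω2 bω1 bω2 : V) (ρ A B C D : ℂ) : ExteriorAlgebra ℂ V :=
  (starRingEnd ℂ) ρ • (ι ℂ bω1 * ι ℂ bω2) + (starRingEnd ℂ) A • (ι ℂ bω1 * ι ℂ ω1) +
    (starRingEnd ℂ) B • (ι ℂ bω1 * ι ℂ ω2) + (starRingEnd ℂ) C • (ι ℂ bω2 * ι ℂ ω1) +
    (starRingEnd ℂ) D • (ι ℂ bω2 * ι ℂ ω2)

section LinearAlgebra

variable {K M : Type*} [Field K] [AddCommGroup M] [Module K M]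

theorem finrank_span_pair_le_one_iff (x y : M) :
    finrank K (Submodule.span K {x, y}) ≤ 1 ↔
      ∃ a b : K, (a ≠ 0 ∨ b ≠ 0) ∧ a • x + b • y = 0 := by
  have hrange : Set.range ![x, y] = {x, y} := Matrix.range_cons_cons_empty x y ![]
  have hle : finrank K (Submodule.span K {x, y}) ≤ 2 := by
    have := finrank_range_le_card (R := K) ![x, y]
    rwa [Set.finrank, hrange, Fintype.card_fin] at this
  have hli : LinearIndependent K ![x, y] ↔ finrank K (Submodule.span K {x, y}) = 2 := by
    rw [linearIndependent_iff_card_eq_finrank_span, Set.finrank, hrange, Fintype.card_fin,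
      eq_comm]
  rw [show finrank K (Submodule.span K {x, y}) ≤ 1 ↔ ¬ LinearIndependent K ![x, y] by
    rw [hli]; omega, LinearIndependent.pair_iff]
  push Not
  exact exists₂_congr fun a b => by tauto

theorem finrank_span_pair_le_one_iff_mul_comm {ι : Type*} (u w : ι → K) :
    finrank K (Submodule.span K {u, w}) ≤ 1 ↔ ∀ i j, u i * w j = u j * w i := by
  rw [finrank_span_pair_le_one_iff]
  constructor
  · rintro ⟨a, b, hab, h⟩ i j
    have hi := congrFun h i
    have hj := congrFun h j
    simp only [Pi.add_apply, Pi.smul_apply, smul_eq_mul, Pi.zero_apply] at hi hj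
    rcases hab with ha | hb
    · exact mul_left_cancel₀ ha (by linear_combination w j * hi - w i * hj)
    · exact mul_left_cancel₀ hb (by linear_combination u i * hj - u j * hi)
  · intro h
    by_cases hw : w = 0
    · exact ⟨0, 1, Or.inr one_ne_zero, by simp [hw]⟩
    obtain ⟨k, hk⟩ := Function.ne_iff.mp hw
    refine ⟨w k, -u k, Or.inl hk, funext fun i => ?_⟩
    simp only [Pi.add_apply, Pi.smul_apply, smul_eq_mul, Pi.zero_apply]
    linear_combination h i k

theorem LinearIndependent.finrank_span_pair_linearCombination {ι : Type*} [Fintype ι]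
    {v : ι → M} (hv : LinearIndependent K v) (u w : ι → K) :
    finrank K (Submodule.span K
        {Fintype.linearCombination K v u, Fintype.linearCombination K v w}) =
      finrank K (Submodule.span K {u, w}) := by
  have hinj := linearIndependent_iff_injective_fintypeLinearCombination.mp hv
  rw [← Set.image_pair, Submodule.span_image]
  exact (Submodule.equivMapOfInjective _ hinj _).finrank_eq.symm

theorem LinearIndependent.exists_dual_eq_ite {ι : Type*} [DecidableEq ι] {v : ι → M}
    (hv : LinearIndependent K v) :
    ∃ φ : ι → Dual K M, ∀ i j, φ i (v j) = if i = j then 1 else 0 := by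
  choose φ hφ using fun i => LinearMap.exists_extend ((Finsupp.lapply i).comp hv.repr)
  refine ⟨φ, fun i j => ?_⟩
  have := LinearMap.congr_fun (hφ i) ⟨v j, Submodule.subset_span ⟨j, rfl⟩⟩
  simpa [hv.repr_eq_single j, Finsupp.single_apply, eq_comm] using this

end LinearAlgebra

section Wedge

variable {R M : Type*} [CommRing R] [AddCommGroup M] [Module R M]

/-- The pairing `⟨φ ∧ ψ, -⟩` on the degree-two part of the exterior algebra, extended by zero
to the other degrees. -/
noncomputable def wedgeCoeff (φ ψ : Dual R M) : ExteriorAlgebra R M →ₗ[R] R :=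
  liftAlternating (Pi.single 2 (Matrix.detRowAlternating.compLinearMap (LinearMap.pi ![φ, ψ])))

theorem wedgeCoeff_ι_mul_ι (φ ψ : Dual R M) (x y : M) :
    wedgeCoeff φ ψ (ι R x * ι R y) = φ x * ψ y - φ y * ψ x := by
  have hιMulti : ι R x * ι R y = ιMulti R 2 ![x, y] := by simp [ιMulti_apply]
  rw [wedgeCoeff, hιMulti, liftAlternating_apply_ιMulti, Pi.single_eq_same]
  change Matrix.det (Matrix.of fun i => LinearMap.pi ![φ, ψ] (![x, y] i)) = _
  rw [Matrix.det_fin_two]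
  simp only [Matrix.of_apply, LinearMap.pi_apply, Matrix.cons_val_zero, Matrix.cons_val_one]
  ring

noncomputable def wedgePairs (x₁ x₂ x₃ x₄ : M) : Fin 6 → ExteriorAlgebra R M :=
  ![ι R x₁ * ι R x₂, ι R x₁ * ι R x₃, ι R x₁ * ι R x₄, ι R x₂ * ι R x₃, ι R x₂ * ι R x₄,
    ι R x₃ * ι R x₄]

theorem linearIndependent_wedgePairs {K V : Type*} [Field K] [AddCommGroup V] [Module K V]
    {x₁ x₂ x₃ x₄ : V} (hx : LinearIndependent K ![x₁, x₂, x₃, x₄]) :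
    LinearIndependent K (wedgePairs (R := K) x₁ x₂ x₃ x₄) := by
  obtain ⟨φ, hφ⟩ := hx.exists_dual_eq_ite
  have h₁ (i) : φ i x₁ = if i = 0 then 1 else 0 := hφ i 0
  have h₂ (i) : φ i x₂ = if i = 1 then 1 else 0 := hφ i 1
  have h₃ (i) : φ i x₃ = if i = 2 then 1 else 0 := hφ i 2
  have h₄ (i) : φ i x₄ = if i = 3 then 1 else 0 := hφ i 3
  let pairs : Fin 6 → Fin 4 × Fin 4 := ![(0, 1), (0, 2), (0, 3), (1, 2), (1, 3), (2, 3)]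
  refine .of_pairwise_dual_eq_zero_one _ (fun k => wedgeCoeff (φ (pairs k).1) (φ (pairs k).2))
    ?_ ?_
  · intro k l hkl
    fin_cases k <;> fin_cases l <;> simp_all [pairs, wedgePairs, wedgeCoeff_ι_mul_ι]
  · intro k
    fin_cases k <;> simp [pairs, wedgePairs, wedgeCoeff_ι_mul_ι, h₁, h₂, h₃, h₄]

end Wedge

section Coefficients

variable {V : Type*} [AddCommGroup V] [Module ℂ V] (ω1 ω2 bω1 bω2 : V) (ρ A B C D : ℂ)

theorem dOmega3_eq_linearCombination :
    dOmega3 ω1 ω2 bω1 bω2 ρ A B C D =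
      Fintype.linearCombination ℂ (wedgePairs ω1 ω2 bω1 bω2) ![ρ, A, B, C, D, 0] := by
  simp [dOmega3, wedgePairs, Fin.sum_univ_six, Fintype.linearCombination_apply]

theorem dOmegaBar3_eq_linearCombination :
    dOmegaBar3 ω1 ω2 bω1 bω2 ρ A B C D =
      Fintype.linearCombination ℂ (wedgePairs ω1 ω2 bω1 bω2)
        ![0, -conj A, -conj C, -conj B, -conj D, conj ρ] := by
  have swap (x y : V) : ι ℂ y * ι ℂ x = -(ι ℂ x * ι ℂ y) :=
    eq_neg_of_add_eq_zero_right (ι_add_mul_swap x y)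
  simp only [dOmegaBar3, wedgePairs, Fin.sum_univ_six, Fintype.linearCombination_apply,
    swap ω1 bω1, swap ω2 bω1, swap ω1 bω2, swap ω2 bω2, Matrix.cons_val_zero,
    Matrix.cons_val_one, Matrix.cons_val]
  module

theorem dOmega3_coeff_mul_comm_iff :
    (∀ i j, ![ρ, A, B, C, D, 0] i * ![0, -conj A, -conj C, -conj B, -conj D, conj ρ] j =
        ![ρ, A, B, C, D, 0] j * ![0, -conj A, -conj C, -conj B, -conj D, conj ρ] i) ↔
      (ρ = 0 ∧ Complex.normSq B = Complex.normSq C ∧ A * conj D = conj A * D ∧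
        A * conj B = conj A * C ∧ D * conj B = conj D * C) := by
  constructor
  · intro h
    have hρ : ρ * conj ρ = 0 := by simpa using h 0 5
    have hBC : B * conj B = C * conj C := by simpa using h 2 3
    have hAD : A * conj D = D * conj A := by simpa using h 1 4
    have hAB : A * conj B = C * conj A := by simpa using h 1 3
    have hDB : C * conj D = D * conj B := by simpa using h 3 4
    refine ⟨by simpa using hρ, ?_, ?_, ?_, ?_⟩
    · exact_mod_cast (Complex.mul_conj B).symm.trans (hBC.trans (Complex.mul_conj C))
    · linear_combination hAD
    · linear_combination hAB
    · linear_combination -hDB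
  · rintro ⟨rfl, hBC, hAD, hAB, hDB⟩ i j
    have hBC' : B * conj B = C * conj C := by
      rw [Complex.mul_conj, Complex.mul_conj, hBC]
    -- the remaining minors are conjugates of the given ones
    have hAB' : conj A * B = A * conj C := by simpa [mul_comm] using congrArg conj hAB
    have hDB' : conj D * B = D * conj C := by simpa [mul_comm] using congrArg conj hDB
    fin_cases i <;> fin_cases j <;> simp only [Fin.reduceFinMk, Matrix.cons_val] <;> grind

end Coefficients

/-- `dω³` and `dω̄³` span a space of complex dimension at most `1` if and only if
`ρ = 0`, `|B|² = |C|²`, `AD̄ = ĀD`, `AB̄ = ĀC` and `DB̄ = D̄C`. -/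
theorem span_dOmega3_dim_le_one_iff {V : Type*} [AddCommGroup V] [Module ℂ V]
    (ω1 ω2 bω1 bω2 : V) (hli : LinearIndependent ℂ ![ω1, ω2, bω1, bω2])
    (ρ A B C D : ℂ) :
    Module.finrank ℂ ↥(Submodule.span ℂ
        {dOmega3 ω1 ω2 bω1 bω2 ρ A B C D, dOmegaBar3 ω1 ω2 bω1 bω2 ρ A B C D}) ≤ 1 ↔
      (ρ = 0 ∧ Complex.normSq B = Complex.normSq C ∧
        A * (starRingEnd ℂ) D = (starRingEnd ℂ) A * D ∧
        A * (starRingEnd ℂ) B = (starRingEnd ℂ) A * C ∧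
        D * (starRingEnd ℂ) B = (starRingEnd ℂ) D * C) := by
  rw [dOmega3_eq_linearCombination, dOmegaBar3_eq_linearCombination,
    (linearIndependent_wedgePairs hli).finrank_span_pair_linearCombination,
    finrank_span_pair_le_one_iff_mul_comm]
  exact dOmega3_coeff_mul_comm_iff ρ A B C D
end

section
/- With dω³ = ρω¹∧ω² + Aω¹∧ω̄¹ + Bω¹∧ω̄² + Cω²∧ω̄¹ + Dω²∧ω̄² and its conjugate dω̄³, if dω³ and dω̄³ are linearly dependent over ℂ then |Δ₁|² = Δ₂², where Δ₁ = AD - BC and Δ₂ = ½(|B|² + |C|² - AD̄ - ĀD - |ρ|²). -/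
/-!
Pairing a vanishing combination `a • dω³ + b • dω̄³` (with `a`, `b` not both zero) against the
2-forms `φᵢ ∧ φⱼ` built from functionals dual to `ω¹, ω², ω̄¹, ω̄²` gives `aρ = bρ̄ = 0` and
`aA = bĀ`, `aB = bC̄`, `aC = bB̄`, `aD = bD̄`. Hence `ρ = 0` and `(A, B, C, D) = t • (Ā, C̄, B̄, D̄)`
for a single `t ∈ ℂ`, so that `Δ₁ = t² Δ̄₁` and `Δ₂ = -t Δ̄₁`, whence `Δ₂² = t² Δ̄₁² = Δ₁ Δ̄₁ = |Δ₁|²`.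
-/

open ExteriorAlgebra

section WedgePairing

variable {R M : Type*} [CommRing R] [AddCommGroup M] [Module R M]

/-- Evaluation of the degree-2 part of an exterior algebra element on `f ∧ g`. -/
noncomputable def wedgePairing (f g : Module.Dual R M) : ExteriorAlgebra R M →ₗ[R] R :=
  liftAlternating (Pi.single 2 (Matrix.detRowAlternating.compLinearMap (LinearMap.pi ![f, g])))

theorem wedgePairing_ι_mul_ι (f g : Module.Dual R M) (x y : M) :
    wedgePairing f g (ι R x * ι R y) = f x * g y - g x * f y := by
  have hxy : ι R x * ι R y = ιMulti R 2 ![x, y] := by simp [ιMulti_apply]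
  rw [hxy, wedgePairing, liftAlternating_apply_ιMulti, Pi.single_eq_same,
    AlternatingMap.compLinearMap_apply]
  change Matrix.det (Matrix.of fun i j ↦ ![f, g] j (![x, y] i)) = _
  simp [Matrix.det_fin_two]

end WedgePairing

theorem LinearIndependent.exists_dual_apply_eq_ite {K V ι : Type*} [Field K] [AddCommGroup V]
    [Module K V] [DecidableEq ι] {v : ι → V} (hv : LinearIndependent K v) :
    ∃ φ : ι → Module.Dual K V, ∀ i j, φ i (v j) = if i = j then 1 else 0 := by
  let b := Module.Basis.span hv
  choose φ hφ using fun i ↦ LinearMap.exists_extend (b.coord i)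
  refine ⟨φ, fun i j ↦ ?_⟩
  have hvj : v j = (Submodule.span K (Set.range v)).subtype (b j) := by
    simp [b, Module.Basis.span_apply]
  rw [hvj, ← LinearMap.comp_apply, hφ, Module.Basis.coord_apply, Module.Basis.repr_self,
    Finsupp.single_apply]
  exact if_congr eq_comm rfl rfl

open ComplexConjugate

theorem coeff_relations_of_smul_dOmega3_add_smul_dOmegaBar3_eq_zero {V : Type*}
    [AddCommGroup V] [Module ℂ V] {ω1 ω2 bω1 bω2 : V}
    (hli : LinearIndependent ℂ ![ω1, ω2, bω1, bω2]) {ρ A B C D a b : ℂ}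
    (h : a • dOmega3 ω1 ω2 bω1 bω2 ρ A B C D + b • dOmegaBar3 ω1 ω2 bω1 bω2 ρ A B C D = 0) :
    a * ρ = 0 ∧ b * conj ρ = 0 ∧ a * A = b * conj A ∧ a * B = b * conj C ∧
      a * C = b * conj B ∧ a * D = b * conj D := by
  obtain ⟨φ, hφ⟩ : ∃ φ : Fin 4 → Module.Dual ℂ V, _ := hli.exists_dual_apply_eq_ite
  have h0 : ∀ i, φ i ω1 = if i = 0 then 1 else 0 := fun i ↦ hφ i 0
  have h1 : ∀ i, φ i ω2 = if i = 1 then 1 else 0 := fun i ↦ hφ i 1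
  have h2 : ∀ i, φ i bω1 = if i = 2 then 1 else 0 := fun i ↦ hφ i 2
  have h3 : ∀ i, φ i bω2 = if i = 3 then 1 else 0 := fun i ↦ hφ i 3
  have hpair : ∀ i j, wedgePairing (φ i) (φ j)
      (a • dOmega3 ω1 ω2 bω1 bω2 ρ A B C D + b • dOmegaBar3 ω1 ω2 bω1 bω2 ρ A B C D) = 0 :=
    fun i j ↦ by rw [h, map_zero]
  have e01 := hpair 0 1
  have e23 := hpair 2 3
  have e02 := hpair 0 2
  have e03 := hpair 0 3
  have e12 := hpair 1 2
  have e13 := hpair 1 3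
  simp only [dOmega3, dOmegaBar3, map_add, map_smul, wedgePairing_ι_mul_ι, h0, h1, h2, h3,
    smul_eq_mul, Fin.reduceEq, ↓reduceIte] at e01 e23 e02 e03 e12 e13
  exact ⟨by linear_combination e01, by linear_combination e23, by linear_combination e02,
    by linear_combination e03, by linear_combination e12, by linear_combination e13⟩

theorem exists_eq_mul_conj_of_coeff_relations {ρ A B C D a b : ℂ} (hab : a = 0 → b ≠ 0)
    (h : a * ρ = 0 ∧ b * conj ρ = 0 ∧ a * A = b * conj A ∧ a * B = b * conj C ∧
      a * C = b * conj B ∧ a * D = b * conj D) :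
    ∃ t : ℂ, ρ = 0 ∧ A = t * conj A ∧ B = t * conj C ∧ C = t * conj B ∧ D = t * conj D := by
  obtain ⟨hρ, hρ', hA, hB, hC, hD⟩ := h
  rcases eq_or_ne a 0 with rfl | ha
  · simp only [zero_mul, zero_eq_mul, mul_eq_zero, hab rfl, false_or, map_eq_zero]
      at hρ' hA hB hC hD
    exact ⟨0, hρ', by simp [hA, hB, hC, hD]⟩
  · have hdiv : ∀ x y : ℂ, a * x = b * y → x = b / a * y := fun x y hxy ↦ by
      rw [div_mul_eq_mul_div, eq_div_iff ha]
      linear_combination hxy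
    exact ⟨b / a, (mul_eq_zero.mp hρ).resolve_left ha, hdiv _ _ hA, hdiv _ _ hB, hdiv _ _ hC,
      hdiv _ _ hD⟩

theorem normSq_eq_sq_of_eq_mul_conj {ρ A B C D t : ℂ} (hρ : ρ = 0) (hA : A = t * conj A)
    (hB : B = t * conj C) (hC : C = t * conj B) (hD : D = t * conj D) :
    Complex.normSq (A * D - B * C) =
      ((Complex.normSq B + Complex.normSq C - (A * conj D + conj A * D).re -
        Complex.normSq ρ) / 2) ^ 2 := by
  have hre : ((A * conj D + conj A * D).re : ℂ) = A * conj D + conj A * D := by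
    rw [← Complex.conj_eq_iff_re]
    simp only [map_add, map_mul, Complex.conj_conj]
    ring
  rw [hρ, map_zero, sub_zero]
  apply Complex.ofReal_injective
  push_cast
  rw [hre, ← Complex.mul_conj, ← Complex.mul_conj, ← Complex.mul_conj]
  simp only [map_sub, map_mul]
  -- freeze the conjugates as atoms, so that only the unconjugated coefficients are substituted
  set cA := conj A
  set cB := conj B
  set cC := conj C
  set cD := conj D
  rw [hA, hB, hC, hD]
  ring

/-- If `dω³` and `dω̄³` are linearly dependent over `ℂ` then `|Δ₁|² = Δ₂²`, where
`Δ₁ = AD - BC` and `Δ₂ = ½(|B|² + |C|² - AD̄ - ĀD - |ρ|²)`. -/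
theorem dependent_implies_delta_eq {V : Type*} [AddCommGroup V] [Module ℂ V]
    (ω1 ω2 bω1 bω2 : V) (hli : LinearIndependent ℂ ![ω1, ω2, bω1, bω2])
    (ρ A B C D : ℂ)
    (hdep : ¬ LinearIndependent ℂ
      ![dOmega3 ω1 ω2 bω1 bω2 ρ A B C D, dOmegaBar3 ω1 ω2 bω1 bω2 ρ A B C D]) :
    Complex.normSq (A * D - B * C) =
      ((Complex.normSq B + Complex.normSq C -
        (A * (starRingEnd ℂ) D + (starRingEnd ℂ) A * D).re - Complex.normSq ρ) / 2) ^ 2 := by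
  rw [LinearIndependent.pair_iff] at hdep
  push Not at hdep
  obtain ⟨a, b, hsum, hab⟩ := hdep
  obtain ⟨t, hρ, hA, hB, hC, hD⟩ := exists_eq_mul_conj_of_coeff_relations hab
    (coeff_relations_of_smul_dOmega3_add_smul_dOmegaBar3_eq_zero hli hsum)
  exact normSq_eq_sq_of_eq_mul_conj hρ hA hB hC hD
end

section
/- Suppose ε = 0, ρ = 0 and Δ₁ := AD - BC = 0. Then Δ₂ := ½(|B|² + |C|² - AD̄ - ĀD) ≥ 0, and Δ₂ = 0 if and only if the five conditions |B|² = |C|², AD̄ = ĀD, AB̄ = ĀC, DB̄ = D̄C hold (i.e. dω³ and dω̄³ are linearly dependent). -/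
/-!
Put `z = A D̄`. Since `AD = BC`, `|z| = |B| |C|`, hence
`Δ₂ = (|B| - |C|)² / 2 + (|z| - Re z)` is a sum of two nonnegative terms, and it vanishes exactly
when `|B| = |C|` and `z ≥ 0`, i.e. `A D̄ = |B|²`. Given `AD = BC` and `|B| = |C|`, this is equivalent
to `AD̄ = ĀD` and `AB̄ = ĀC` (cancel `D̄`, resp. `C`); exchanging `A` and `D` turns `AB̄ = ĀC`
into `DB̄ = D̄C`.
-/

open Complex ComplexConjugate
open scoped ComplexOrder

namespace Complex

variable {A B C D : ℂ}

theorem norm_mul_conj_eq_of_mul_eq (h : A * D = B * C) : ‖A * conj D‖ = ‖B‖ * ‖C‖ := by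
  rw [norm_mul, norm_conj, ← norm_mul, h, norm_mul]

theorem re_mul_conj_add_conj_mul (A D : ℂ) :
    (A * conj D + conj A * D).re = 2 * (A * conj D).re := by
  rw [← conj_conj D, ← map_mul, conj_conj, add_conj]
  norm_cast

theorem normSq_add_normSq_sub_re_div_two_eq (h : A * D = B * C) :
    (normSq B + normSq C - (A * conj D + conj A * D).re) / 2 =
      (‖B‖ - ‖C‖) ^ 2 / 2 + (‖A * conj D‖ - (A * conj D).re) := by
  rw [re_mul_conj_add_conj_mul, norm_mul_conj_eq_of_mul_eq h, normSq_eq_norm_sq,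
    normSq_eq_norm_sq]
  ring

theorem normSq_add_normSq_sub_re_div_two_nonneg (h : A * D = B * C) :
    0 ≤ (normSq B + normSq C - (A * conj D + conj A * D).re) / 2 := by
  rw [normSq_add_normSq_sub_re_div_two_eq h]
  have := re_le_norm (A * conj D)
  positivity

theorem normSq_add_normSq_sub_re_div_two_eq_zero_iff (h : A * D = B * C) :
    (normSq B + normSq C - (A * conj D + conj A * D).re) / 2 = 0 ↔
      ‖B‖ = ‖C‖ ∧ 0 ≤ A * conj D := by
  rw [normSq_add_normSq_sub_re_div_two_eq h,
    add_eq_zero_iff_of_nonneg (by positivity) (sub_nonneg.2 (re_le_norm _)),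
    div_eq_zero_iff, sq_eq_zero_iff, sub_eq_zero, sub_eq_zero, eq_comm (a := ‖A * conj D‖),
    re_eq_norm]
  simp only [two_ne_zero, or_false]

theorem mul_conj_eq_conj_mul_of_nonneg (h : A * D = B * C) (hBC : ‖B‖ = ‖C‖)
    (hz : 0 ≤ A * conj D) : A * conj B = conj A * C := by
  rcases eq_or_ne D 0 with rfl | hD
  · have hC : C = 0 := by
      rcases mul_eq_zero.1 (h.symm.trans (mul_zero A)) with hB | hC
      · rwa [← norm_eq_zero, ← hBC, norm_eq_zero]
      · exact hC
    obtain rfl : B = 0 := by rwa [← norm_eq_zero, hBC, norm_eq_zero]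
    simp [hC]
  have hz' : A * conj D = B * conj B := by
    rw [eq_coe_norm_of_nonneg hz, norm_mul_conj_eq_of_mul_eq h, mul_conj, normSq_eq_norm_sq, ← hBC]
    push_cast
    ring
  have hADc : conj A * conj D = conj B * conj C := by rw [← map_mul, ← map_mul, h]
  have hCC : C * conj C = B * conj B := by
    rw [mul_conj, mul_conj, normSq_eq_norm_sq, normSq_eq_norm_sq, hBC]
  apply mul_right_cancel₀ ((map_ne_zero conj).2 hD)
  linear_combination conj B * hz' - C * hADc - conj B * hCC

theorem mul_conj_nonneg_of_conj_mul (h : A * D = B * C) (hBC : normSq B = normSq C)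
    (hAD : A * conj D = conj A * D) (hAB : A * conj B = conj A * C) : 0 ≤ A * conj D := by
  suffices A * conj D = normSq B by rw [this]; exact_mod_cast normSq_nonneg B
  rcases eq_or_ne C 0 with rfl | hC
  · have hB : B = 0 := by rw [← normSq_eq_zero, hBC, normSq_zero]
    rcases mul_eq_zero.1 (h.trans (mul_zero B)) with rfl | rfl <;> simp [hB]
  apply mul_right_cancel₀ hC
  linear_combination C * hAD - D * hAB + conj B * h + C * mul_conj B

theorem norm_eq_and_mul_conj_nonneg_iff (h : A * D = B * C) :
    ‖B‖ = ‖C‖ ∧ 0 ≤ A * conj D ↔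
      normSq B = normSq C ∧ A * conj D = conj A * D ∧ A * conj B = conj A * C ∧
        D * conj B = conj D * C := by
  rw [normSq_eq_norm_sq, normSq_eq_norm_sq, sq_eq_sq₀ (norm_nonneg _) (norm_nonneg _)]
  constructor
  · rintro ⟨hBC, hz⟩
    have hAD : A * conj D = conj A * D := by
      conv_rhs => rw [← conj_conj D, ← map_mul, eq_coe_norm_of_nonneg hz, conj_ofReal]
      exact eq_coe_norm_of_nonneg hz
    have hz' : 0 ≤ D * conj A := by rwa [mul_comm, ← hAD]
    exact ⟨hBC, hAD, mul_conj_eq_conj_mul_of_nonneg h hBC hz,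
      mul_conj_eq_conj_mul_of_nonneg (by rw [mul_comm, h]) hBC hz'⟩
  · rintro ⟨hBC, hAD, hAB, -⟩
    refine ⟨hBC, mul_conj_nonneg_of_conj_mul h ?_ hAD hAB⟩
    rw [normSq_eq_norm_sq, normSq_eq_norm_sq, hBC]

end Complex

/-- Suppose `ε = 0`, `ρ = 0` and `Δ₁ = AD - BC = 0`.  Then
`Δ₂ = ½(|B|² + |C|² - AD̄ - ĀD) ≥ 0`, and `Δ₂ = 0` if and only if the conditions
`|B|² = |C|²`, `AD̄ = ĀD`, `AB̄ = ĀC`, `DB̄ = D̄C` hold (linear dependence of `dω³` and `dω̄³`). -/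
theorem delta2_nonneg_and_zero_iff_dependent (A B C D : ℂ)
    (hΔ₁ : A * D - B * C = 0) :
    0 ≤ (Complex.normSq B + Complex.normSq C -
        (A * (starRingEnd ℂ) D + (starRingEnd ℂ) A * D).re) / 2 ∧
    ((Complex.normSq B + Complex.normSq C -
        (A * (starRingEnd ℂ) D + (starRingEnd ℂ) A * D).re) / 2 = 0 ↔
      (Complex.normSq B = Complex.normSq C ∧
        A * (starRingEnd ℂ) D = (starRingEnd ℂ) A * D ∧
        A * (starRingEnd ℂ) B = (starRingEnd ℂ) A * C ∧
        D * (starRingEnd ℂ) B = (starRingEnd ℂ) D * C)) := by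
  have h : A * D = B * C := sub_eq_zero.mp hΔ₁
  exact ⟨normSq_add_normSq_sub_re_div_two_nonneg h,
    (normSq_add_normSq_sub_re_div_two_eq_zero_iff h).trans (norm_eq_and_mul_conj_nonneg_iff h)⟩
end

section
/- On the Lie algebra h₆ with structure equations de⁵ = e¹∧e², de⁶ = e¹∧e³ (all other de^i = 0), every 2-form of the shape Ω = a e²∧e³ + b e¹∧e⁴ + c(e¹∧e²-e³∧e⁴) - k(e¹∧e³+e²∧e⁴) + ℓ(e²∧e⁵+e³∧e⁶) with a,b,c,k,ℓ ∈ ℝ is closed, and Ω is non-degenerate if and only if b ≠ 0 and ℓ ≠ 0. -/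
/-!
Only `e⁵` and `e⁶` have non-zero differential, and they enter `Ω` only through
`ℓ (e²∧e⁵ + e³∧e⁶)`, whose differential is `-ℓ (e²∧e¹∧e² + e³∧e¹∧e³) = 0`; so `Ω` is closed.
Expanding in the exterior algebra gives `Ω³ = -6 b ℓ² e¹∧…∧e⁶`, and the volume form is non-zero
because the determinant, viewed as an alternating map, sends it to `1`.
-/

open ExteriorAlgebra

noncomputable def E (i : Fin 6) : Fin 6 → ℝ := Pi.single i 1

namespace ExteriorAlgebra

variable {R M : Type*} [CommRing R] [AddCommGroup M] [Module R M]

theorem ι_mul_ι_mul_self (u : M) (z : ExteriorAlgebra R M) : ι R u * (ι R u * z) = 0 := by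
  rw [← mul_assoc, ι_sq_zero, zero_mul]

theorem ι_mul_ι_swap (u v : M) : ι R v * ι R u = -(ι R u * ι R v) :=
  eq_neg_of_add_eq_zero_right (ι_add_mul_swap u v)

theorem ι_mul_ι_mul_swap (u v : M) (z : ExteriorAlgebra R M) :
    ι R v * (ι R u * z) = -(ι R u * (ι R v * z)) := by
  rw [← mul_assoc, ι_mul_ι_swap, neg_mul, mul_assoc]

theorem ιMulti_basis_ne_zero [Nontrivial R] {n : ℕ} (b : Module.Basis (Fin n) R M) :
    ιMulti R n b ≠ 0 := by
  intro h
  have := liftAlternating_apply_ιMulti (Function.update 0 n b.det) b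
  rw [h, map_zero, Function.update_self, b.det_self] at this
  exact zero_ne_one this

theorem map_ι_mul_ι_eq_zero {δ : ExteriorAlgebra R M →ₗ[R] ExteriorAlgebra R M}
    (hder : ∀ (w : M) (z : ExteriorAlgebra R M), δ (ι R w * z) = δ (ι R w) * z - ι R w * δ z)
    {u v : M} (hu : δ (ι R u) = 0) (hv : ι R u * δ (ι R v) = 0) : δ (ι R u * ι R v) = 0 := by
  rw [hder, hu, hv, zero_mul, sub_zero]

end ExteriorAlgebra

theorem ιMulti_E_ne_zero : ιMulti ℝ 6 E ≠ 0 := by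
  convert ιMulti_basis_ne_zero (Pi.basisFun ℝ (Fin 6))
  ext1 i
  simp [E]

theorem h6_form_pow_three (a b c k ℓ : ℝ) :
    (a • (ι ℝ (E 1) * ι ℝ (E 2)) + b • (ι ℝ (E 0) * ι ℝ (E 3)) +
        c • (ι ℝ (E 0) * ι ℝ (E 1) - ι ℝ (E 2) * ι ℝ (E 3)) -
        k • (ι ℝ (E 0) * ι ℝ (E 2) + ι ℝ (E 1) * ι ℝ (E 3)) +
        ℓ • (ι ℝ (E 1) * ι ℝ (E 4) + ι ℝ (E 2) * ι ℝ (E 5))) ^ 3 =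
      (-6 * b * ℓ ^ 2) • ιMulti ℝ 6 E := by
  have vol : ιMulti ℝ 6 E =
      ι ℝ (E 0) * (ι ℝ (E 1) * (ι ℝ (E 2) * (ι ℝ (E 3) * (ι ℝ (E 4) * ι ℝ (E 5))))) := by
    rw [ιMulti_apply]
    simp [List.ofFn_succ]
  -- The order condition `i < j` lets `simp` sort every monomial without looping.
  have swap : ∀ i j : Fin 6, i < j → ι ℝ (E j) * ι ℝ (E i) = -(ι ℝ (E i) * ι ℝ (E j)) :=
    fun _ _ _ => ι_mul_ι_swap _ _
  have swap' : ∀ i j : Fin 6, i < j → ∀ z,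
      ι ℝ (E j) * (ι ℝ (E i) * z) = -(ι ℝ (E i) * (ι ℝ (E j) * z)) :=
    fun _ _ _ => ι_mul_ι_mul_swap _ _
  rw [vol]
  simp only [pow_succ, pow_zero, one_mul, mul_add, add_mul, mul_sub, sub_mul, smul_mul_assoc,
    mul_smul_comm, mul_neg, neg_mul, smul_neg, neg_neg, mul_assoc, ι_sq_zero, ι_mul_ι_mul_self,
    mul_zero, smul_zero, add_zero, zero_add, neg_zero, sub_zero, zero_sub, swap, swap',
    Fin.reduceLT]
  module

/-- On the Lie algebra `h₆` with structure equations `de⁵ = e¹∧e²`, `de⁶ = e¹∧e³`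
(all other `de^i = 0`), every 2-form of the shape
`Ω = a e²∧e³ + b e¹∧e⁴ + c(e¹∧e²-e³∧e⁴) - k(e¹∧e³+e²∧e⁴) + ℓ(e²∧e⁵+e³∧e⁶)`
is closed, and `Ω` is non-degenerate (`Ω∧Ω∧Ω ≠ 0`) if and only if `b ≠ 0` and `ℓ ≠ 0`. -/
theorem h6_one_one_forms_closed_and_nondegeneracy
    (a b c k ℓ : ℝ)
    (δ : ExteriorAlgebra ℝ (Fin 6 → ℝ) →ₗ[ℝ] ExteriorAlgebra ℝ (Fin 6 → ℝ))
    (hder : ∀ (w : Fin 6 → ℝ) (z : ExteriorAlgebra ℝ (Fin 6 → ℝ)),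
      δ (ι ℝ w * z) = δ (ι ℝ w) * z - ι ℝ w * δ z)
    (hδ : ∀ i : Fin 6, i ≠ 4 → i ≠ 5 → δ (ι ℝ (E i)) = 0)
    (hδ5 : δ (ι ℝ (E 4)) = ι ℝ (E 0) * ι ℝ (E 1))
    (hδ6 : δ (ι ℝ (E 5)) = ι ℝ (E 0) * ι ℝ (E 2)) :
    δ (a • (ι ℝ (E 1) * ι ℝ (E 2)) + b • (ι ℝ (E 0) * ι ℝ (E 3)) +
        c • (ι ℝ (E 0) * ι ℝ (E 1) - ι ℝ (E 2) * ι ℝ (E 3)) -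
        k • (ι ℝ (E 0) * ι ℝ (E 2) + ι ℝ (E 1) * ι ℝ (E 3)) +
        ℓ • (ι ℝ (E 1) * ι ℝ (E 4) + ι ℝ (E 2) * ι ℝ (E 5))) = 0 ∧
    ((a • (ι ℝ (E 1) * ι ℝ (E 2)) + b • (ι ℝ (E 0) * ι ℝ (E 3)) +
        c • (ι ℝ (E 0) * ι ℝ (E 1) - ι ℝ (E 2) * ι ℝ (E 3)) -
        k • (ι ℝ (E 0) * ι ℝ (E 2) + ι ℝ (E 1) * ι ℝ (E 3)) +
        ℓ • (ι ℝ (E 1) * ι ℝ (E 4) + ι ℝ (E 2) * ι ℝ (E 5))) ^ 3 ≠ 0 ↔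
      (b ≠ 0 ∧ ℓ ≠ 0)) := by
  have closed : ∀ i j : Fin 6, i < 4 → j < 4 → δ (ι ℝ (E i) * ι ℝ (E j)) = 0 :=
    fun i j hi hj => map_ι_mul_ι_eq_zero hder (hδ i (by omega) (by omega))
      (by rw [hδ j (by omega) (by omega), mul_zero])
  have closed₁₄ : δ (ι ℝ (E 1) * ι ℝ (E 4)) = 0 :=
    map_ι_mul_ι_eq_zero hder (hδ 1 (by decide) (by decide))
      (by rw [hδ5, ι_mul_ι_mul_swap, ι_sq_zero, mul_zero, neg_zero])
  have closed₂₅ : δ (ι ℝ (E 2) * ι ℝ (E 5)) = 0 :=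
    map_ι_mul_ι_eq_zero hder (hδ 2 (by decide) (by decide))
      (by rw [hδ6, ι_mul_ι_mul_swap, ι_sq_zero, mul_zero, neg_zero])
  refine ⟨?_, ?_⟩
  · simp only [map_add, map_sub, map_smul, closed, closed₁₄, closed₂₅, Fin.reduceLT,
      smul_zero, add_zero, sub_zero]
  · rw [h6_form_pow_three, smul_ne_zero_iff, and_iff_left ιMulti_E_ne_zero]
    simp
end

section
/- Let h₈ be the 6-dimensional real Lie algebra with only nonzero bracket [e₁,e₂] = -e₆, and let Ω = b e³∧e⁴ - u(e¹∧e⁵+e²∧e⁶) + v(e²∧e⁵-e¹∧e⁶) + a e¹∧e² + x(e¹∧e³+e²∧e⁴) - y(e²∧e³-e¹∧e⁴) be a closed non-degenerate 2-form (b ≠ 0, u²+v² ≠ 0). Then the bracket on h₈* defined by [α,β]_Ω := Ω([Ω⁻¹α, Ω⁻¹β]) satisfies [-ue⁵-ve⁶, ve⁵-ue⁶]_Ω = -(ue² + ve¹), and the Lie algebra (h₈*, [·,·]_Ω) is 2-step nilpotent with 1-dimensional derived subalgebra. -/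
/-- The Lie bracket of `h₈`, whose only nonzero bracket on basis vectors is
`[e₁, e₂] = -e₆`. -/
noncomputable def h8Bracket (p q : Fin 6 → ℝ) : Fin 6 → ℝ :=
  -((p 0 * q 1 - p 1 * q 0)) • E 5

/-- The matrix of the 2-form
`Ω = a e¹∧e² + b e³∧e⁴ + x(e¹∧e³+e²∧e⁴) - y(e²∧e³-e¹∧e⁴) - u(e¹∧e⁵+e²∧e⁶) + v(e²∧e⁵-e¹∧e⁶)`,
i.e. `S i j = Ω(e_{i+1}, e_{j+1})`. -/
noncomputable def OmegaMatrix (a b x y u v : ℝ) : Matrix (Fin 6) (Fin 6) ℝ :=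
  !![0, a, x, y, -u, -v;
     -a, 0, -y, x, v, -u;
     -x, y, 0, b, 0, 0;
     -y, -x, -b, 0, 0, 0;
     u, -v, 0, 0, 0, 0;
     v, u, 0, 0, 0, 0]

/-- Contraction with `Ω`, as a linear map `h₈ → h₈*` (in the dual-basis coordinates),
`(ι_pΩ)_j = Ω(p, e_j)`. -/
noncomputable def OmegaContraction (a b x y u v : ℝ) : (Fin 6 → ℝ) →ₗ[ℝ] (Fin 6 → ℝ) :=
  ((OmegaMatrix a b x y u v).transpose).mulVecLin

section aux
variable {α : Type*} (x₀ x₁ x₂ x₃ x₄ x₅ : α)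
lemma vec6_0 : ![x₀,x₁,x₂,x₃,x₄,x₅] (0 : Fin 6) = x₀ := rfl
lemma vec6_1 : ![x₀,x₁,x₂,x₃,x₄,x₅] (1 : Fin 6) = x₁ := rfl
lemma vec6_2 : ![x₀,x₁,x₂,x₃,x₄,x₅] (2 : Fin 6) = x₂ := rfl
lemma vec6_3 : ![x₀,x₁,x₂,x₃,x₄,x₅] (3 : Fin 6) = x₃ := rfl
lemma vec6_4 : ![x₀,x₁,x₂,x₃,x₄,x₅] (4 : Fin 6) = x₄ := rfl
lemma vec6_5 : ![x₀,x₁,x₂,x₃,x₄,x₅] (5 : Fin 6) = x₅ := rfl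
lemma vec6_mk0 (h : 0 < 6) : ![x₀,x₁,x₂,x₃,x₄,x₅] (⟨0, h⟩ : Fin 6) = x₀ := rfl
lemma vec6_mk1 (h : 1 < 6) : ![x₀,x₁,x₂,x₃,x₄,x₅] (⟨1, h⟩ : Fin 6) = x₁ := rfl
lemma vec6_mk2 (h : 2 < 6) : ![x₀,x₁,x₂,x₃,x₄,x₅] (⟨2, h⟩ : Fin 6) = x₂ := rfl
lemma vec6_mk3 (h : 3 < 6) : ![x₀,x₁,x₂,x₃,x₄,x₅] (⟨3, h⟩ : Fin 6) = x₃ := rfl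
lemma vec6_mk4 (h : 4 < 6) : ![x₀,x₁,x₂,x₃,x₄,x₅] (⟨4, h⟩ : Fin 6) = x₄ := rfl
lemma vec6_mk5 (h : 5 < 6) : ![x₀,x₁,x₂,x₃,x₄,x₅] (⟨5, h⟩ : Fin 6) = x₅ := rfl
end aux

lemma contr (a b x y u v : ℝ) (p : Fin 6 → ℝ) :
    OmegaContraction a b x y u v p =
      ![ -a * p 1 - x * p 2 - y * p 3 + u * p 4 + v * p 5,
         a * p 0 + y * p 2 - x * p 3 - v * p 4 + u * p 5,
         x * p 0 - y * p 1 - b * p 3,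
         y * p 0 + x * p 1 + b * p 2,
         -u * p 0 + v * p 1,
         -v * p 0 - u * p 1 ] := by
  funext j
  have h : OmegaContraction a b x y u v p j =
      p 0 * OmegaMatrix a b x y u v 0 j + p 1 * OmegaMatrix a b x y u v 1 j +
      p 2 * OmegaMatrix a b x y u v 2 j + p 3 * OmegaMatrix a b x y u v 3 j +
      p 4 * OmegaMatrix a b x y u v 4 j + p 5 * OmegaMatrix a b x y u v 5 j := by
    simp only [OmegaContraction, Matrix.mulVecLin_apply, Matrix.mulVec_transpose,
      Matrix.vecMul, dotProduct, Fin.sum_univ_six]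
  rw [h]
  fin_cases j <;>
    · simp only [OmegaMatrix, Matrix.of_apply, vec6_mk0, vec6_mk1, vec6_mk2, vec6_mk3,
        vec6_mk4, vec6_mk5, vec6_0, vec6_1, vec6_2, vec6_3, vec6_4, vec6_5]
      ring

lemma h8Bracket_apply (p q : Fin 6 → ℝ) :
    h8Bracket p q = ![0, 0, 0, 0, 0, -(p 0 * q 1 - p 1 * q 0)] := by
  funext j
  fin_cases j <;> simp [h8Bracket, E, Pi.single_apply, vec6_mk0, vec6_mk1, vec6_mk2,
    vec6_mk3, vec6_mk4, vec6_mk5, vec6_0, vec6_1, vec6_2, vec6_3, vec6_4, vec6_5]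

/-- For the non-degenerate closed 2-form `Ω` on `h₈` (`b ≠ 0`, `u² + v² ≠ 0`), the bracket
`[α,β]_Ω = Ω([Ω⁻¹α, Ω⁻¹β])` on `h₈*` satisfies
`[-ue⁵-ve⁶, ve⁵-ue⁶]_Ω = -(ue² + ve¹)`, and `(h₈*, [·,·]_Ω)` is 2-step nilpotent with
1-dimensional derived subalgebra. -/
theorem h8_omega_bracket (a b x y u v : ℝ) (hb : b ≠ 0) (huv : u ^ 2 + v ^ 2 ≠ 0) :
    (∀ γ δ : Fin 6 → ℝ,
      OmegaContraction a b x y u v γ = (-u) • E 4 - v • E 5 →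
      OmegaContraction a b x y u v δ = v • E 4 - u • E 5 →
      OmegaContraction a b x y u v (h8Bracket γ δ) = -(u • E 1 + v • E 0)) ∧
    (∀ γ δ χ : Fin 6 → ℝ,
      OmegaContraction a b x y u v (h8Bracket (h8Bracket γ δ) χ) = 0) ∧
    Module.finrank ℝ ↥(Submodule.span ℝ (Set.range
      (fun p : (Fin 6 → ℝ) × (Fin 6 → ℝ) =>
        OmegaContraction a b x y u v (h8Bracket p.1 p.2)))) = 1 := by
  -- the image of the bracket under contraction
  have hf : ∀ p q : Fin 6 → ℝ,
      OmegaContraction a b x y u v (h8Bracket p q) =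
        (-(p 0 * q 1 - p 1 * q 0)) • ![v, u, 0, 0, 0, 0] := by
    intro p q
    rw [h8Bracket_apply, contr]
    funext j
    fin_cases j <;>
      · simp only [vec6_mk0, vec6_mk1, vec6_mk2, vec6_mk3, vec6_mk4, vec6_mk5,
          vec6_0, vec6_1, vec6_2, vec6_3, vec6_4, vec6_5, Pi.smul_apply, smul_eq_mul]
        ring
  refine ⟨?_, ?_, ?_⟩
  · intro γ δ hγ hδ
    rw [contr] at hγ hδ
    have e1 : -u * γ 0 + v * γ 1 = -u := by
      have h := congrFun hγ 4
      simpa [vec6_4, E, Pi.single_apply] using h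
    have e2 : -v * γ 0 - u * γ 1 = -v := by
      have h := congrFun hγ 5
      simpa [vec6_5, E, Pi.single_apply] using h
    have e3 : -u * δ 0 + v * δ 1 = v := by
      have h := congrFun hδ 4
      simpa [vec6_4, E, Pi.single_apply] using h
    have e4 : -v * δ 0 - u * δ 1 = -u := by
      have h := congrFun hδ 5
      simpa [vec6_5, E, Pi.single_apply] using h
    have hγ0 : γ 0 = 1 := by
      have : (u ^ 2 + v ^ 2) * γ 0 = (u ^ 2 + v ^ 2) * 1 := by
        linear_combination (-u) * e1 + (-v) * e2
      exact mul_left_cancel₀ huv this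
    have hγ1 : γ 1 = 0 := by
      have : (u ^ 2 + v ^ 2) * γ 1 = (u ^ 2 + v ^ 2) * 0 := by
        linear_combination v * e1 + (-u) * e2
      exact mul_left_cancel₀ huv this
    have hδ0 : δ 0 = 0 := by
      have : (u ^ 2 + v ^ 2) * δ 0 = (u ^ 2 + v ^ 2) * 0 := by
        linear_combination (-u) * e3 + (-v) * e4
      exact mul_left_cancel₀ huv this
    have hδ1 : δ 1 = 1 := by
      have : (u ^ 2 + v ^ 2) * δ 1 = (u ^ 2 + v ^ 2) * 1 := by
        linear_combination v * e3 + (-u) * e4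
      exact mul_left_cancel₀ huv this
    rw [hf, hγ0, hγ1, hδ0, hδ1]
    funext j
    fin_cases j <;>
      simp [vec6_mk0, vec6_mk1, vec6_mk2, vec6_mk3, vec6_mk4, vec6_mk5,
        vec6_0, vec6_1, vec6_2, vec6_3, vec6_4, vec6_5, E, Pi.single_apply]
  · intro γ δ χ
    have h0 : h8Bracket γ δ 0 = 0 := by rw [h8Bracket_apply]; rfl
    have h1 : h8Bracket γ δ 1 = 0 := by rw [h8Bracket_apply]; rfl
    rw [hf, h0, h1]
    simp
  · have hw : (![v, u, 0, 0, 0, 0] : Fin 6 → ℝ) ≠ 0 := by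
      intro h
      have h0 := congrFun h 0
      have h1 := congrFun h 1
      simp only [vec6_0, vec6_1, Pi.zero_apply] at h0 h1
      exact huv (by rw [h0, h1]; ring)
    have hspan : Submodule.span ℝ (Set.range
        (fun p : (Fin 6 → ℝ) × (Fin 6 → ℝ) =>
          OmegaContraction a b x y u v (h8Bracket p.1 p.2))) =
        Submodule.span ℝ {(![v, u, 0, 0, 0, 0] : Fin 6 → ℝ)} := by
      apply le_antisymm
      · rw [Submodule.span_le]
        rintro _ ⟨p, rfl⟩
        simp only [hf]
        exact Submodule.smul_mem _ _ (Submodule.mem_span_singleton_self _)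
      · rw [Submodule.span_le, Set.singleton_subset_iff]
        apply Submodule.subset_span
        refine ⟨(E 0, -E 1), ?_⟩
        simp only [hf]
        have : (E 0 0 : ℝ) = 1 ∧ (E 0 1 : ℝ) = 0 ∧ ((-E 1) 0 : ℝ) = 0 ∧ ((-E 1) 1 : ℝ) = -1 := by
          refine ⟨?_, ?_, ?_, ?_⟩ <;> simp [E, Pi.single_apply]
        obtain ⟨a1, a2, a3, a4⟩ := this
        rw [a1, a2, a3, a4]
        norm_num
    rw [hspan]
    exact finrank_span_singleton hw
end
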